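/- arXiv:1608.06747 — 5 statements merged into one kernel-verified Lean document; each statement's English description precedes it below -/
import Mathlib

section
/- Let $v_1,\dots,v_N \in \mathbb{R}^d$ and let $d_V := \max_{1\le i,j\le N} |v_i - v_j|$. Fix $0 < \kappa \le 1/N$ and define $\Omega_\kappa := \{ \sum_{i=1}^N \psi_i v_i : \psi_i \ge \kappa \text{ for all } i, \ \sum_{i=1}^N \psi_i = 1\}$. Then for any two elements $w_1, w_2 \in \Omega_\kappa$ one has $|w_1 - w_2| \le (1 - \kappa N)\, d_V$. -/
/-!
Subtracting `κ` from every coefficient writes `w₁ - w₂ = ∑ aᵢ vᵢ - ∑ bᵢ vᵢ` with nonnegative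
weights `a`, `b` of common total mass `s = 1 - κ N`. Multiplying by `s = ∑ bⱼ = ∑ aᵢ` turns this
difference into `∑ᵢ ∑ⱼ aᵢ bⱼ (vᵢ - vⱼ)`, whose norm is at most `s² d_V`; dividing by `s` gives
`s d_V` (and for `s = 0` both weight vectors vanish).
-/

open Finset

section WeightedSums

variable {ι E : Type*} [Fintype ι] [SeminormedAddCommGroup E] [NormedSpace ℝ E]

theorem sum_smul_sum_smul_sub_sum_smul_sum_smul (a b : ι → ℝ) (v : ι → E) :
    (∑ j, b j) • ∑ i, a i • v i - (∑ i, a i) • ∑ j, b j • v j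
      = ∑ i, ∑ j, (a i * b j) • (v i - v j) := by
  simp only [smul_sub, sum_sub_distrib, smul_sum, smul_smul]
  rw [sum_comm (f := fun i j => (a i * b j) • v j)]
  congr 1 <;> refine sum_congr rfl fun _ _ => ?_
  · rw [sum_mul, sum_smul]
    exact sum_congr rfl fun _ _ => by rw [mul_comm]
  · rw [sum_mul, sum_smul]

theorem norm_sum_sum_smul_sub_le {a b : ι → ℝ} (ha : 0 ≤ a) (hb : 0 ≤ b) {v : ι → E} {D : ℝ}
    (hD : ∀ i j, ‖v i - v j‖ ≤ D) :
    ‖∑ i, ∑ j, (a i * b j) • (v i - v j)‖ ≤ (∑ i, a i) * ((∑ j, b j) * D) := by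
  calc ‖∑ i, ∑ j, (a i * b j) • (v i - v j)‖
      ≤ ∑ i, ∑ j, ‖(a i * b j) • (v i - v j)‖ :=
        (norm_sum_le _ _).trans (sum_le_sum fun i _ => norm_sum_le _ _)
    _ ≤ ∑ i, ∑ j, a i * (b j * D) := by
        gcongr with i _ j _
        rw [norm_smul, Real.norm_of_nonneg (mul_nonneg (ha i) (hb j)), mul_assoc]
        exact mul_le_mul_of_nonneg_left (mul_le_mul_of_nonneg_left (hD i j) (hb j)) (ha i)
    _ = (∑ i, a i) * ((∑ j, b j) * D) := by simp only [← mul_sum, ← sum_mul]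

theorem norm_sum_smul_sub_sum_smul_le {a b : ι → ℝ} (ha : 0 ≤ a) (hb : 0 ≤ b)
    (hab : ∑ i, a i = ∑ i, b i) {v : ι → E} {D : ℝ} (hD : ∀ i j, ‖v i - v j‖ ≤ D) :
    ‖∑ i, a i • v i - ∑ i, b i • v i‖ ≤ (∑ i, a i) * D := by
  rcases (sum_nonneg fun i _ => ha i : 0 ≤ ∑ i, a i).eq_or_lt with hs0 | hspos
  · have ha0 : a = 0 := funext fun i =>
      (sum_eq_zero_iff_of_nonneg fun i _ => ha i).1 hs0.symm i (mem_univ i)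
    have hb0 : b = 0 := funext fun i =>
      (sum_eq_zero_iff_of_nonneg fun i _ => hb i).1 (hab ▸ hs0.symm) i (mem_univ i)
    rw [← hs0]
    simp [ha0, hb0]
  · have hsmul : (∑ i, a i) • (∑ i, a i • v i - ∑ i, b i • v i)
        = ∑ i, ∑ j, (a i * b j) • (v i - v j) := by
      rw [← sum_smul_sum_smul_sub_sum_smul_sum_smul, ← hab, smul_sub]
    have h := norm_sum_sum_smul_sub_le ha hb hD (v := v)
    rw [← hsmul, norm_smul, Real.norm_of_nonneg hspos.le, ← hab] at h
    exact le_of_mul_le_mul_left h hspos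

end WeightedSums

theorem norm_sub_le_iSup_iSup_norm_sub {ι E : Type*} [Finite ι] [SeminormedAddCommGroup E]
    (v : ι → E) (i j : ι) : ‖v i - v j‖ ≤ ⨆ i, ⨆ j, ‖v i - v j‖ :=
  le_ciSup_of_le (Set.finite_range _).bddAbove i <|
    le_ciSup (Set.finite_range fun j => ‖v i - v j‖).bddAbove j

theorem stmt_0_general {d N : ℕ} (v : Fin N → EuclideanSpace ℝ (Fin d))
    (κ : ℝ)
    (dV : ℝ) (hdV : dV = ⨆ i : Fin N, ⨆ j : Fin N, ‖v i - v j‖)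
    (w₁ w₂ : EuclideanSpace ℝ (Fin d))
    (hw₁ : ∃ ψ : Fin N → ℝ, (∀ i, κ ≤ ψ i) ∧ (∑ i, ψ i) = 1 ∧ w₁ = ∑ i, ψ i • v i)
    (hw₂ : ∃ ψ : Fin N → ℝ, (∀ i, κ ≤ ψ i) ∧ (∑ i, ψ i) = 1 ∧ w₂ = ∑ i, ψ i • v i) :
    ‖w₁ - w₂‖ ≤ (1 - κ * N) * dV := by
  obtain ⟨ψ, hψκ, hψ1, rfl⟩ := hw₁
  obtain ⟨φ, hφκ, hφ1, rfl⟩ := hw₂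
  have hsub : ∑ i, ψ i • v i - ∑ i, φ i • v i
      = ∑ i, (ψ i - κ) • v i - ∑ i, (φ i - κ) • v i := by
    simp only [sub_smul, sum_sub_distrib]
    abel
  have hmass : ∀ χ : Fin N → ℝ, ∑ i, χ i = 1 → ∑ i, (χ i - κ) = 1 - κ * N := fun χ hχ => by
    simp [sum_sub_distrib, hχ, mul_comm]
  rw [hsub, ← hmass ψ hψ1]
  refine norm_sum_smul_sub_sum_smul_le (fun i => sub_nonneg.2 (hψκ i))
    (fun i => sub_nonneg.2 (hφκ i)) ?_ fun i j => hdV ▸ norm_sub_le_iSup_iSup_norm_sub v i j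
  rw [hmass ψ hψ1, hmass φ hφ1]

theorem stmt_0 {d N : ℕ} (hN : 1 ≤ N) (v : Fin N → EuclideanSpace ℝ (Fin d))
    (κ : ℝ) (hκ : 0 < κ) (hκN : κ ≤ 1 / N)
    (dV : ℝ) (hdV : dV = ⨆ i : Fin N, ⨆ j : Fin N, ‖v i - v j‖)
    (w₁ w₂ : EuclideanSpace ℝ (Fin d))
    (hw₁ : ∃ ψ : Fin N → ℝ, (∀ i, κ ≤ ψ i) ∧ (∑ i, ψ i) = 1 ∧ w₁ = ∑ i, ψ i • v i)
    (hw₂ : ∃ ψ : Fin N → ℝ, (∀ i, κ ≤ ψ i) ∧ (∑ i, ψ i) = 1 ∧ w₂ = ∑ i, ψ i • v i) :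
    ‖w₁ - w₂‖ ≤ (1 - κ * N) * dV :=
  stmt_0_general v κ dV hdV w₁ w₂ hw₁ hw₂
end

section
/- Let $R > 0$, $\tau > 0$, and suppose $v : [-\tau,\infty) \to [0,\infty)$ is continuous, differentiable on $(0,\infty)$, satisfies $v(s) \le R$ for $s \in [-\tau, 0]$, and satisfies $v'(t) \le \sup_{s \in [t-\tau,t)} v(s) - v(t)$ for all $t > 0$. Then $v(t) \le R$ for all $t \ge 0$. -/
open Set Filter Real Topology

theorem stmt_5 (R τ : ℝ) (hR : 0 < R) (hτ : 0 < τ)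
    (v : ℝ → ℝ) (hv_nonneg : ∀ t, -τ ≤ t → 0 ≤ v t)
    (hv_cont : ContinuousOn v (Set.Ici (-τ)))
    (hv_diff : DifferentiableOn ℝ v (Set.Ioi 0))
    (hv_init : ∀ s, s ∈ Set.Icc (-τ) 0 → v s ≤ R)
    (hv_ineq : ∀ t, 0 < t → deriv v t ≤ sSup (v '' Set.Ico (t - τ) t) - v t) :
    ∀ t, 0 ≤ t → v t ≤ R := by
  have hcont : ∀ s : ℝ, -τ < s → ContinuousAt v s := fun s hs =>
    hv_cont.continuousAt (Ici_mem_nhds hs)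
  intro t ht
  by_contra hlt
  push_neg at hlt
  set ε := v t - R with hε
  have hε0 : 0 < ε := sub_pos.2 hlt
  set T : Set ℝ := {s | 0 ≤ s ∧ R + ε ≤ v s} with hT
  have hTne : T.Nonempty := ⟨t, ht, by simp [hε]⟩
  have hTbdd : BddBelow T := ⟨0, fun s hs => hs.1⟩
  set t₀ := sInf T with ht₀def
  have ht₀0 : 0 ≤ t₀ := le_csInf hTne fun s hs => hs.1
  have ht₀T : R + ε ≤ v t₀ := by
    by_contra h
    push_neg at h
    have hc : Tendsto v (𝓝 t₀) (𝓝 (v t₀)) := hcont t₀ (by linarith)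
    have h2 : ∀ᶠ s in 𝓝 t₀, v s < R + ε := hc (Iio_mem_nhds h)
    rw [Metric.eventually_nhds_iff] at h2
    obtain ⟨δ, hδ0, hδ⟩ := h2
    obtain ⟨x, hxT, hx⟩ := Real.lt_sInf_add_pos hTne hδ0
    have hx0 : t₀ ≤ x := csInf_le hTbdd hxT
    have : v x < R + ε := hδ (by rw [Real.dist_eq]; rw [abs_lt]; constructor <;> [linarith; linarith])
    exact absurd hxT.2 (not_le.2 this)
  have ht₀pos : 0 < t₀ := by
    rcases ht₀0.lt_or_eq with h | h
    · exact h
    · have h2 : v t₀ = v 0 := by rw [← h]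
      have := hv_init 0 ⟨by linarith, le_rfl⟩
      linarith
  have hbelow : ∀ s, 0 ≤ s → s < t₀ → v s < R + ε := by
    intro s hs0 hst
    by_contra h
    push_neg at h
    exact absurd (csInf_le hTbdd ⟨hs0, h⟩) (not_le.2 hst)
  have hpast : ∀ x, 0 < x → x ≤ t₀ → sSup (v '' Ico (x - τ) x) ≤ R + ε := by
    intro x hx hxt
    apply Real.sSup_le
    · rintro y ⟨s, hs, rfl⟩
      rcases le_or_gt s 0 with h | h
      · have := hv_init s ⟨by linarith [hs.1], h⟩
        linarith
      · exact (hbelow s h.le (lt_of_lt_of_le hs.2 hxt)).le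
    · linarith
  have hderiv : ∀ x, 0 < x → x < t₀ → deriv v x ≤ (-1) * v x + (R + ε) := by
    intro x hx hxt
    have h1 := hv_ineq x hx
    have h2 := hpast x hx hxt.le
    linarith
  have key : ∀ a, a ∈ Ioo (0:ℝ) t₀ →
      v t₀ ≤ v a * exp (-(t₀ - a)) + (R + ε) * (1 - exp (-(t₀ - a))) := by
    intro a ha
    have hgron := le_gronwallBound_of_liminf_deriv_right_le (f := v) (f' := deriv v)
      (δ := v a) (K := -1) (ε := R + ε) (a := a) (b := t₀)
      (hv_cont.mono (fun x hx => le_trans (by linarith [ha.1] : -τ ≤ a) hx.1))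
      (fun x hx r hr => by
        have hxpos : (0:ℝ) < x := lt_of_lt_of_le ha.1 hx.1
        have hd : HasDerivWithinAt v (deriv v x) (Ici x) x :=
          ((hv_diff.differentiableAt (Ioi_mem_nhds hxpos)).hasDerivAt).hasDerivWithinAt
        exact hd.liminf_right_slope_le hr)
      le_rfl
      (fun x hx => hderiv x (lt_of_lt_of_le ha.1 hx.1) hx.2)
      t₀ ⟨ha.2.le, le_rfl⟩
    rw [gronwallBound_of_K_ne_0 (by norm_num : (-1:ℝ) ≠ 0)] at hgron
    have : v a * exp (-1 * (t₀ - a)) + (R + ε) / -1 * (exp (-1 * (t₀ - a)) - 1)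
        = v a * exp (-(t₀ - a)) + (R + ε) * (1 - exp (-(t₀ - a))) := by
      ring_nf
    simp only [this] at hgron
    exact hgron
  have hv0 : Tendsto v (𝓝[>] (0:ℝ)) (𝓝 (v 0)) :=
    (hcont 0 (by linarith)).tendsto.mono_left nhdsWithin_le_nhds
  have hexp : Tendsto (fun a : ℝ => exp (-(t₀ - a))) (𝓝[>] (0:ℝ)) (𝓝 (exp (-t₀))) := by
    have hc : Continuous fun a : ℝ => exp (-(t₀ - a)) := by continuity
    have := (hc.tendsto 0).mono_left (nhdsWithin_le_nhds (s := Ioi (0:ℝ)))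
    simpa using this
  have hg : Tendsto (fun a => v a * exp (-(t₀ - a)) + (R + ε) * (1 - exp (-(t₀ - a))))
      (𝓝[>] (0:ℝ)) (𝓝 (v 0 * exp (-t₀) + (R + ε) * (1 - exp (-t₀)))) :=
    (hv0.mul hexp).add (tendsto_const_nhds.mul (tendsto_const_nhds.sub hexp))
  have hev : ∀ᶠ a in 𝓝[>] (0:ℝ), v t₀ ≤ v a * exp (-(t₀ - a)) + (R + ε) * (1 - exp (-(t₀ - a))) := by
    filter_upwards [Ioo_mem_nhdsGT_of_mem (Set.mem_Ico.2 ⟨le_rfl, ht₀pos⟩)] with a ha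
    exact key a ha
  have hfin : v t₀ ≤ v 0 * exp (-t₀) + (R + ε) * (1 - exp (-t₀)) := ge_of_tendsto hg hev
  have hv0R : v 0 ≤ R := hv_init 0 ⟨by linarith, le_rfl⟩
  have hE : 0 < exp (-t₀) := exp_pos _
  nlinarith [mul_pos hε0 hE, mul_le_mul_of_nonneg_right hv0R hE.le]
end

section
/- Let $\lambda = \mu + i\sigma \in \mathbb{C}$ (with $\mu, \sigma \in \mathbb{R}$) be a root of the characteristic equation $\lambda = -e^{-\lambda \tau} - 1$ for some $\tau > 0$. Then $\mu \le 0$. -/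
/-!
If `Re λ > 0`, then `|λ + 1| ≥ Re λ + 1 > 1`, whereas `|e^{-λτ}| = e^{-τ Re λ} < 1`;
so the two sides of `λ + 1 = -e^{-λτ}` cannot agree.
-/

open Complex

lemma Complex.norm_exp_neg_mul_ofReal_lt_one {z : ℂ} {τ : ℝ} (hz : 0 < z.re) (hτ : 0 < τ) :
    ‖exp (-z * τ)‖ < 1 := by
  have hre : (-z * (τ : ℂ)).re = -(z.re * τ) := by simp
  rw [norm_exp, hre, Real.exp_lt_one_iff, neg_lt_zero]
  exact mul_pos hz hτ

lemma Complex.one_lt_norm_add_one {z : ℂ} (hz : 0 < z.re) : 1 < ‖z + 1‖ :=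
  calc (1 : ℝ) < (z + 1).re := by simp [hz]
    _ ≤ ‖z + 1‖ := re_le_norm _

theorem stmt_11 (τ : ℝ) (hτ : 0 < τ) (lam : ℂ)
    (h : lam = -Complex.exp (-lam * τ) - 1) : lam.re ≤ 0 := by
  by_contra! hpos
  have hroot : lam + 1 = -Complex.exp (-lam * τ) := by linear_combination h
  have hnorm : ‖lam + 1‖ = ‖Complex.exp (-lam * τ)‖ := by rw [hroot, norm_neg]
  linarith [one_lt_norm_add_one hpos, norm_exp_neg_mul_ofReal_lt_one hpos hτ]
end

section
/- Let $\tau > 0$, $C > 0$, $\bar u := \max_{s\in[-\tau,0]} u(s)$, and let $u : [-\tau,\infty) \to [0,\infty)$ be continuous, differentiable on $(0,\infty)$, satisfying $u'(t) \le C(u(t) + u(t-\tau))$ for all $t > 0$. Then $u(t) \le \bar u\, e^{2Ct}$ for all $t \ge 0$. -/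
/-!
Put `v t = u t * exp (-2 C t)`, so that `v' ≤ C (u (t - τ) exp (-2 C t) - v t)`. If `v` reached a
level `L` above `sup_{[-τ, 0]} u`, then at the first time `x` it does, the delayed term is still
below `L` (it is an initial value, or `exp (-2 C τ)` times an earlier value of `v`), so `v' x < 0`;
but `v < L` on `[0, x)` forces `v' x ≥ 0`.
-/
open Real Set

theorem HasDerivAt.nonneg_of_isMaxOn_Icc {f : ℝ → ℝ} {f' a x : ℝ} (hf : HasDerivAt f f' x)
    (hax : a < x) (hmax : IsMaxOn f (Icc a x) x) : 0 ≤ f' := by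
  have hcone : a - x ∈ posTangentConeAt (Icc a x) x :=
    mem_posTangentConeAt_of_segment_subset (by
      rw [add_sub_cancel, segment_symm, segment_eq_Icc hax.le])
  have := hmax.localize.hasFDerivWithinAt_nonpos hf.hasDerivWithinAt.hasFDerivWithinAt hcone
  simp only [ContinuousLinearMap.toSpanSingleton_apply, smul_eq_mul] at this
  nlinarith

theorem ContinuousOn.exists_first_ge {f : ℝ → ℝ} {a b L : ℝ} (hf : ContinuousOn f (Icc a b))
    (ha : f a < L) (hb : L ≤ f b) (hab : a ≤ b) :
    ∃ x ∈ Ioc a b, L ≤ f x ∧ ∀ s ∈ Ico a x, f s < L := by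
  obtain ⟨x, ⟨hxab, hLx⟩, hleast⟩ := (isCompact_Icc.of_isClosed_subset
    (hf.preimage_isClosed_of_isClosed isClosed_Icc isClosed_Ici) inter_subset_left).exists_isLeast
      ⟨b, ⟨hab, le_rfl⟩, hb⟩
  have hax : a < x := hxab.1.lt_of_ne (by rintro rfl; exact (not_le.2 ha) hLx)
  refine ⟨x, ⟨hax, hxab.2⟩, hLx, fun s hs => not_le.1 fun hLs => ?_⟩
  exact (not_le.2 hs.2) (hleast ⟨⟨hs.1, hs.2.le.trans hxab.2⟩, hLs⟩)

theorem HasDerivAt.mul_exp_neg_mul {f : ℝ → ℝ} {f' x : ℝ} (k : ℝ) (hf : HasDerivAt f f' x) :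
    HasDerivAt (fun t => f t * Real.exp (-(k * t))) ((f' - k * f x) * Real.exp (-(k * x))) x := by
  have hexp : HasDerivAt (fun t => Real.exp (-(k * t))) (Real.exp (-(k * x)) * -k) x := by
    simpa using ((hasDerivAt_id x).const_mul k).neg.exp
  exact (hf.mul hexp).congr_deriv (by ring)

theorem mul_exp_neg_lt_of_delay_deriv_le {τ C M L : ℝ} {u : ℝ → ℝ} (hτ : 0 < τ) (hC : 0 < C)
    (hu_nonneg : ∀ t, -τ ≤ t → 0 ≤ u t) (hu_cont : ContinuousOn u (Ici (-τ)))
    (hu_diff : DifferentiableOn ℝ u (Ioi 0))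
    (hu_ineq : ∀ t, 0 < t → deriv u t ≤ C * (u t + u (t - τ)))
    (hM : ∀ s ∈ Icc (-τ) 0, u s ≤ M) (hL : M < L) {t : ℝ} (ht : 0 ≤ t) :
    u t * exp (-(2 * C * t)) < L := by
  set v : ℝ → ℝ := fun s => u s * exp (-(2 * C * s))
  by_contra! hLt
  have hv_cont : ContinuousOn v (Icc 0 t) :=
    (hu_cont.mono fun s hs => by simp only [mem_Ici]; linarith [hs.1]).mul (by fun_prop)
  have hv0 : v 0 < L := by simpa [v] using (hM 0 ⟨by linarith, le_rfl⟩).trans_lt hL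
  obtain ⟨x, ⟨hx0, -⟩, hLx, hbefore⟩ := hv_cont.exists_first_ge hv0 hLt ht
  have hderiv := (hu_diff.differentiableAt (Ioi_mem_nhds hx0)).hasDerivAt.mul_exp_neg_mul (2 * C)
  have hmax : IsMaxOn v (Icc 0 x) x := fun s hs => show v s ≤ v x by
    rcases hs.2.eq_or_lt with rfl | h
    exacts [le_rfl, (hbefore s ⟨hs.1, h⟩).le.trans hLx]
  have hv'_nonneg := hderiv.nonneg_of_isMaxOn_Icc hx0 hmax
  have hdelay : u (x - τ) * exp (-(2 * C * x)) < L := by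
    rcases lt_or_ge (x - τ) 0 with h | h
    · calc u (x - τ) * exp (-(2 * C * x)) ≤ u (x - τ) :=
            mul_le_of_le_one_right (hu_nonneg _ (by linarith))
              (exp_le_one_iff.2 (by nlinarith))
        _ ≤ M := hM _ ⟨by linarith, h.le⟩
        _ < L := hL
    · calc u (x - τ) * exp (-(2 * C * x)) = v (x - τ) * exp (-(2 * C * τ)) := by
            simp only [v, mul_assoc, ← exp_add]; ring_nf
        _ ≤ v (x - τ) := mul_le_of_le_one_right
            (mul_nonneg (hu_nonneg _ (by linarith)) (exp_pos _).le)
            (exp_le_one_iff.2 (by nlinarith))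
        _ < L := hbefore _ ⟨h, by linarith⟩
  have hv'_neg : (deriv u x - 2 * C * u x) * exp (-(2 * C * x)) < 0 := calc
    _ ≤ C * (u (x - τ) - u x) * exp (-(2 * C * x)) := by
        gcongr; linarith [hu_ineq x hx0]
    _ = C * (u (x - τ) * exp (-(2 * C * x)) - v x) := by ring
    _ < 0 := mul_neg_of_pos_of_neg hC (by linarith)
  linarith

theorem stmt_13 (τ C : ℝ) (hτ : 0 < τ) (hC : 0 < C)
    (u : ℝ → ℝ) (hu_nonneg : ∀ t, -τ ≤ t → 0 ≤ u t)
    (hu_cont : ContinuousOn u (Set.Ici (-τ)))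
    (hu_diff : DifferentiableOn ℝ u (Set.Ioi 0))
    (hu_ineq : ∀ t, 0 < t → deriv u t ≤ C * (u t + u (t - τ))) :
    ∀ t, 0 ≤ t → u t ≤ (sSup (u '' Set.Icc (-τ) 0)) * Real.exp (2 * C * t) := by
  intro t ht
  have hbdd : BddAbove (u '' Icc (-τ) 0) :=
    (isCompact_Icc.image_of_continuousOn (hu_cont.mono Icc_subset_Ici_self)).bddAbove
  have hM : ∀ s ∈ Icc (-τ) 0, u s ≤ sSup (u '' Icc (-τ) 0) :=
    fun s hs => le_csSup hbdd (mem_image_of_mem u hs)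
  have hv : u t * exp (-(2 * C * t)) ≤ sSup (u '' Icc (-τ) 0) := le_of_forall_gt fun L hL =>
    mul_exp_neg_lt_of_delay_deriv_le hτ hC hu_nonneg hu_cont hu_diff hu_ineq hM hL ht
  rwa [exp_neg, ← div_eq_mul_inv, div_le_iff₀ (exp_pos _)] at hv
end

section
/- Let $\psi : [0,\infty)\to(0,\infty)$ be bounded by $M$, Lipschitz with constant $L$, and nonincreasing, and let $f$ be a probability measure on $\mathbb{R}^d \times \mathbb{R}^d$ supported in $B^{2d}(0,R)$. Define $F[f](x,v) := \frac{\int \psi(|x-y|)(w - v)\,df(y,w)}{\int \psi(|x-y|)\,df(y,w)}$. Then there exists a constant $C$, depending only on $R$, $M$, $L$ and $\psi(2R)$, such that $|F[f](x,v)| \le C$ and $|F[f](x,v) - F[f](\tilde x, \tilde v)| \le C(|x - \tilde x| + |v - \tilde v|)$ for all $(x,v), (\tilde x, \tilde v) \in B^{2d}(0,R)$. -/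
open MeasureTheory

/-!
The denominator `∫ ψ(|x - y|) df` is bounded below by `ψ(2R)` because `ψ` is nonincreasing and
`|x - y| ≤ 2R` on the support, while numerator and denominator are bounded and Lipschitz by the
bound and the Lipschitz constant of `ψ`. A quotient `a⁻¹ • u` with `a` bounded below inherits both
properties, via `a⁻¹ • u - b⁻¹ • w = a⁻¹ • (u - w) + (a⁻¹ - b⁻¹) • w`.
-/

lemma norm_inv_smul_sub_inv_smul_le {E : Type*} [NormedAddCommGroup E] [NormedSpace ℝ E]
    {a b c : ℝ} (hc : 0 < c) (hca : c ≤ a) (hcb : c ≤ b) (u w : E) :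
    ‖a⁻¹ • u - b⁻¹ • w‖ ≤ ‖u - w‖ / c + |a - b| * ‖w‖ / c ^ 2 := by
  have ha : 0 < a := hc.trans_le hca
  have hb : 0 < b := hc.trans_le hcb
  have hinv : |a⁻¹ - b⁻¹| ≤ |a - b| / c ^ 2 := by
    rw [inv_sub_inv ha.ne' hb.ne', abs_div, abs_sub_comm, abs_of_pos (mul_pos ha hb), sq]
    gcongr
  calc ‖a⁻¹ • u - b⁻¹ • w‖ = ‖a⁻¹ • (u - w) + (a⁻¹ - b⁻¹) • w‖ := by congr 1; module
    _ ≤ a⁻¹ * ‖u - w‖ + |a⁻¹ - b⁻¹| * ‖w‖ := by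
      grw [norm_add_le, norm_smul, norm_smul, Real.norm_of_nonneg (inv_nonneg.2 ha.le),
        Real.norm_eq_abs]
    _ ≤ c⁻¹ * ‖u - w‖ + |a - b| / c ^ 2 * ‖w‖ := by gcongr
    _ = ‖u - w‖ / c + |a - b| * ‖w‖ / c ^ 2 := by ring

lemma norm_integral_le_of_ae_norm_le {α G : Type*} [MeasurableSpace α] [NormedAddCommGroup G]
    [NormedSpace ℝ G] {μ : Measure α} [IsProbabilityMeasure μ] {f : α → G} {C : ℝ}
    (h : ∀ᵐ x ∂μ, ‖f x‖ ≤ C) : ‖∫ x, f x ∂μ‖ ≤ C := by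
  simpa using norm_integral_le_of_norm_le_const h

lemma abs_comp_norm_sub_sub_comp_norm_sub_le {E : Type*} [SeminormedAddCommGroup E]
    {ψ : ℝ → ℝ} {L : NNReal} (hψ : LipschitzOnWith L ψ (Set.Ici 0)) (x x' y : E) :
    |ψ ‖x - y‖ - ψ ‖x' - y‖| ≤ L * ‖x - x'‖ := by
  calc |ψ ‖x - y‖ - ψ ‖x' - y‖| ≤ L * |‖x - y‖ - ‖x' - y‖| := by
        simpa [Real.dist_eq] using
          hψ.dist_le_mul _ (norm_nonneg (x - y)) _ (norm_nonneg (x' - y))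
    _ ≤ L * ‖x - x'‖ := by
      gcongr
      simpa using abs_norm_sub_norm_le (x - y) (x' - y)

lemma continuous_comp_norm_sub_fst {E : Type*} [SeminormedAddCommGroup E] {ψ : ℝ → ℝ}
    (hψ : ContinuousOn ψ (Set.Ici 0)) (x : E) : Continuous fun p : E × E => ψ ‖x - p.1‖ :=
  hψ.comp_continuous (by fun_prop) fun p => norm_nonneg _

lemma norm_snd_sub_le_of_norm_le {E : Type*} [SeminormedAddCommGroup E] {p : E × E} {R : ℝ}
    (hp : ‖p‖ ≤ R) (v : E) : ‖p.2 - v‖ ≤ R + ‖v‖ :=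
  (norm_sub_le _ _).trans (by grw [norm_snd_le p, hp])

lemma norm_comp_norm_sub_smul_le {E : Type*} [SeminormedAddCommGroup E] [NormedSpace ℝ E]
    {ψ : ℝ → ℝ} {M : ℝ} (hψ_nonneg : ∀ s, 0 ≤ s → 0 ≤ ψ s) (hψ_bdd : ∀ s, 0 ≤ s → ψ s ≤ M)
    (x y u : E) : ‖ψ ‖x - y‖ • u‖ ≤ M * ‖u‖ := by
  rw [norm_smul, Real.norm_of_nonneg (hψ_nonneg _ (norm_nonneg _))]
  gcongr
  exact hψ_bdd _ (norm_nonneg _)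

section Alignment

variable {E : Type*} [NormedAddCommGroup E] [MeasurableSpace E] {μ : Measure (E × E)}
  {ψ : ℝ → ℝ} {M R : ℝ}

noncomputable def alignmentMass (ψ : ℝ → ℝ) (μ : Measure (E × E)) (x : E) : ℝ :=
  ∫ p, ψ ‖x - p.1‖ ∂μ

section Mass

variable [BorelSpace E] [SecondCountableTopology E]

lemma integrable_comp_norm_sub_fst [IsFiniteMeasure μ] (hψ_cont : ContinuousOn ψ (Set.Ici 0))
    (hψ_nonneg : ∀ s, 0 ≤ s → 0 ≤ ψ s) (hψ_bdd : ∀ s, 0 ≤ s → ψ s ≤ M) (x : E) :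
    Integrable (fun p : E × E => ψ ‖x - p.1‖) μ := by
  refine .of_bound (continuous_comp_norm_sub_fst hψ_cont x).aestronglyMeasurable M
    (ae_of_all _ fun p => ?_)
  rw [Real.norm_of_nonneg (hψ_nonneg _ (norm_nonneg _))]
  exact hψ_bdd _ (norm_nonneg _)

lemma le_alignmentMass [IsProbabilityMeasure μ] (hψ_cont : ContinuousOn ψ (Set.Ici 0))
    (hψ_nonneg : ∀ s, 0 ≤ s → 0 ≤ ψ s) (hψ_bdd : ∀ s, 0 ≤ s → ψ s ≤ M)
    (hψ_mono : ∀ s t, 0 ≤ s → s ≤ t → ψ t ≤ ψ s) (hμ : ∀ᵐ p ∂μ, ‖p‖ ≤ R) {x : E}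
    (hx : ‖x‖ ≤ R) : ψ (2 * R) ≤ alignmentMass ψ μ x := by
  have hmono := integral_mono_ae (integrable_const (ψ (2 * R)))
    (integrable_comp_norm_sub_fst (μ := μ) hψ_cont hψ_nonneg hψ_bdd x) <| hμ.mono fun p hp => by
      refine hψ_mono _ _ (norm_nonneg _) ?_
      grw [norm_sub_le, norm_fst_le p, hp, hx]
      linarith
  simpa [alignmentMass] using hmono

lemma abs_alignmentMass_sub_le [IsProbabilityMeasure μ] {L : NNReal}
    (hψ_lip : LipschitzOnWith L ψ (Set.Ici 0)) (hψ_nonneg : ∀ s, 0 ≤ s → 0 ≤ ψ s)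
    (hψ_bdd : ∀ s, 0 ≤ s → ψ s ≤ M) (x x' : E) :
    |alignmentMass ψ μ x - alignmentMass ψ μ x'| ≤ L * ‖x - x'‖ := by
  have hint := integrable_comp_norm_sub_fst (μ := μ) hψ_lip.continuousOn hψ_nonneg hψ_bdd
  rw [alignmentMass, alignmentMass, ← integral_sub (hint x) (hint x'), ← Real.norm_eq_abs]
  exact norm_integral_le_of_ae_norm_le <| ae_of_all _ fun p =>
    abs_comp_norm_sub_sub_comp_norm_sub_le hψ_lip x x' p.1

end Mass

variable [NormedSpace ℝ E]

noncomputable def alignmentMomentum (ψ : ℝ → ℝ) (μ : Measure (E × E)) (x v : E) : E :=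
  ∫ p, ψ ‖x - p.1‖ • (p.2 - v) ∂μ

noncomputable def alignmentForce (ψ : ℝ → ℝ) (μ : Measure (E × E)) (x v : E) : E :=
  (alignmentMass ψ μ x)⁻¹ • alignmentMomentum ψ μ x v

lemma norm_alignmentMomentum_le [IsProbabilityMeasure μ] (hψ_nonneg : ∀ s, 0 ≤ s → 0 ≤ ψ s)
    (hψ_bdd : ∀ s, 0 ≤ s → ψ s ≤ M) (hμ : ∀ᵐ p ∂μ, ‖p‖ ≤ R) (x : E) {v : E} (hv : ‖v‖ ≤ R) :
    ‖alignmentMomentum ψ μ x v‖ ≤ M * (2 * R) := by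
  have hM : 0 ≤ M := (hψ_nonneg 0 le_rfl).trans (hψ_bdd 0 le_rfl)
  refine norm_integral_le_of_ae_norm_le <| hμ.mono fun p hp => ?_
  grw [norm_comp_norm_sub_smul_le hψ_nonneg hψ_bdd, norm_snd_sub_le_of_norm_le hp, hv]
  linarith

variable [BorelSpace E] [SecondCountableTopology E]

lemma integrable_comp_norm_sub_fst_smul [IsFiniteMeasure μ] (hψ_cont : ContinuousOn ψ (Set.Ici 0))
    (hψ_nonneg : ∀ s, 0 ≤ s → 0 ≤ ψ s) (hψ_bdd : ∀ s, 0 ≤ s → ψ s ≤ M)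
    (hμ : ∀ᵐ p ∂μ, ‖p‖ ≤ R) (x v : E) :
    Integrable (fun p : E × E => ψ ‖x - p.1‖ • (p.2 - v)) μ := by
  refine .of_bound (((continuous_comp_norm_sub_fst hψ_cont x).smul (by fun_prop)).aestronglyMeasurable)
    (M * (R + ‖v‖)) (hμ.mono fun p hp => ?_)
  grw [norm_comp_norm_sub_smul_le hψ_nonneg hψ_bdd, norm_snd_sub_le_of_norm_le hp]
  exact (hψ_nonneg 0 le_rfl).trans (hψ_bdd 0 le_rfl)

lemma norm_alignmentMomentum_sub_le [IsProbabilityMeasure μ] {L : NNReal}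
    (hψ_lip : LipschitzOnWith L ψ (Set.Ici 0)) (hψ_nonneg : ∀ s, 0 ≤ s → 0 ≤ ψ s)
    (hψ_bdd : ∀ s, 0 ≤ s → ψ s ≤ M) (hμ : ∀ᵐ p ∂μ, ‖p‖ ≤ R) {v : E} (hv : ‖v‖ ≤ R)
    (x x' v' : E) :
    ‖alignmentMomentum ψ μ x v - alignmentMomentum ψ μ x' v'‖
      ≤ L * ‖x - x'‖ * (2 * R) + M * ‖v - v'‖ := by
  have hint := integrable_comp_norm_sub_fst_smul hψ_lip.continuousOn hψ_nonneg hψ_bdd hμ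
  rw [alignmentMomentum, alignmentMomentum, ← integral_sub (hint x v) (hint x' v')]
  refine norm_integral_le_of_ae_norm_le <| hμ.mono fun p hp => ?_
  have hsplit : ψ ‖x - p.1‖ • (p.2 - v) - ψ ‖x' - p.1‖ • (p.2 - v')
      = (ψ ‖x - p.1‖ - ψ ‖x' - p.1‖) • (p.2 - v) + ψ ‖x' - p.1‖ • (v' - v) := by
    module
  rw [hsplit, norm_sub_rev v]
  grw [norm_add_le, norm_comp_norm_sub_smul_le hψ_nonneg hψ_bdd, norm_smul, Real.norm_eq_abs,
    abs_comp_norm_sub_sub_comp_norm_sub_le hψ_lip, norm_snd_sub_le_of_norm_le hp, hv]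
  linarith

lemma norm_alignmentForce_le [IsProbabilityMeasure μ] (hR : 0 ≤ R)
    (hψ_cont : ContinuousOn ψ (Set.Ici 0)) (hψ_pos : ∀ s, 0 ≤ s → 0 < ψ s)
    (hψ_bdd : ∀ s, 0 ≤ s → ψ s ≤ M) (hψ_mono : ∀ s t, 0 ≤ s → s ≤ t → ψ t ≤ ψ s)
    (hμ : ∀ᵐ p ∂μ, ‖p‖ ≤ R) {x v : E} (hx : ‖x‖ ≤ R) (hv : ‖v‖ ≤ R) :
    ‖alignmentForce ψ μ x v‖ ≤ M * (2 * R) / ψ (2 * R) := by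
  have hψ_nonneg s hs : 0 ≤ ψ s := (hψ_pos s hs).le
  have hM : 0 ≤ M := (hψ_nonneg 0 le_rfl).trans (hψ_bdd 0 le_rfl)
  have hc : 0 < ψ (2 * R) := hψ_pos _ (by positivity)
  have hmass := le_alignmentMass hψ_cont hψ_nonneg hψ_bdd hψ_mono hμ hx
  rw [alignmentForce, norm_smul, Real.norm_of_nonneg (inv_nonneg.2 (hc.trans_le hmass).le),
    inv_mul_eq_div]
  exact div_le_div₀ (by positivity) (norm_alignmentMomentum_le hψ_nonneg hψ_bdd hμ x hv) hc hmass

lemma norm_alignmentForce_sub_le [IsProbabilityMeasure μ] {L : NNReal} (hR : 0 ≤ R)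
    (hψ_lip : LipschitzOnWith L ψ (Set.Ici 0)) (hψ_pos : ∀ s, 0 ≤ s → 0 < ψ s)
    (hψ_bdd : ∀ s, 0 ≤ s → ψ s ≤ M) (hψ_mono : ∀ s t, 0 ≤ s → s ≤ t → ψ t ≤ ψ s)
    (hμ : ∀ᵐ p ∂μ, ‖p‖ ≤ R) {x v x' v' : E} (hx : ‖x‖ ≤ R) (hv : ‖v‖ ≤ R) (hx' : ‖x'‖ ≤ R)
    (hv' : ‖v'‖ ≤ R) :
    ‖alignmentForce ψ μ x v - alignmentForce ψ μ x' v'‖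
      ≤ ((L * (2 * R) + M) / ψ (2 * R) + L * (M * (2 * R)) / ψ (2 * R) ^ 2)
        * (‖x - x'‖ + ‖v - v'‖) := by
  have hψ_nonneg s hs : 0 ≤ ψ s := (hψ_pos s hs).le
  have hM : 0 ≤ M := (hψ_nonneg 0 le_rfl).trans (hψ_bdd 0 le_rfl)
  set c := ψ (2 * R)
  have hc : 0 < c := hψ_pos _ (by positivity)
  have hmass {y : E} (hy : ‖y‖ ≤ R) :=
    le_alignmentMass hψ_lip.continuousOn hψ_nonneg hψ_bdd hψ_mono hμ hy
  calc ‖alignmentForce ψ μ x v - alignmentForce ψ μ x' v'‖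
      ≤ ‖alignmentMomentum ψ μ x v - alignmentMomentum ψ μ x' v'‖ / c
        + |alignmentMass ψ μ x - alignmentMass ψ μ x'| * ‖alignmentMomentum ψ μ x' v'‖ / c ^ 2 :=
        norm_inv_smul_sub_inv_smul_le hc (hmass hx) (hmass hx') _ _
    _ ≤ (L * ‖x - x'‖ * (2 * R) + M * ‖v - v'‖) / c + L * ‖x - x'‖ * (M * (2 * R)) / c ^ 2 := by
        grw [norm_alignmentMomentum_sub_le hψ_lip hψ_nonneg hψ_bdd hμ hv,
          abs_alignmentMass_sub_le hψ_lip hψ_nonneg hψ_bdd,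
          norm_alignmentMomentum_le hψ_nonneg hψ_bdd hμ x' hv']
    _ ≤ ((L * (2 * R) + M) / c + L * (M * (2 * R)) / c ^ 2) * (‖x - x'‖ + ‖v - v'‖) := by
        have hslack : 0 ≤ M * ‖x - x'‖ / c + L * (2 * R) * ‖v - v'‖ / c
            + L * (M * (2 * R)) * ‖v - v'‖ / c ^ 2 := by positivity
        linarith [show ((L * (2 * R) + M) / c + L * (M * (2 * R)) / c ^ 2) * (‖x - x'‖ + ‖v - v'‖)
          = (L * ‖x - x'‖ * (2 * R) + M * ‖v - v'‖) / c + L * ‖x - x'‖ * (M * (2 * R)) / c ^ 2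
            + (M * ‖x - x'‖ / c + L * (2 * R) * ‖v - v'‖ / c
              + L * (M * (2 * R)) * ‖v - v'‖ / c ^ 2) by ring]

end Alignment

theorem stmt_15 {d : ℕ} (ψ : ℝ → ℝ) (L : NNReal) (M R : ℝ) (hR : 0 < R)
    (hψ_pos : ∀ s, 0 ≤ s → 0 < ψ s)
    (hψ_mono : ∀ s t, 0 ≤ s → s ≤ t → ψ t ≤ ψ s)
    (hψ_lip : LipschitzOnWith L ψ (Set.Ici 0))
    (hψ_bdd : ∀ s, 0 ≤ s → ψ s ≤ M)
    (f : Measure (EuclideanSpace ℝ (Fin d) × EuclideanSpace ℝ (Fin d)))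
    [IsProbabilityMeasure f]
    (hsupp : f (Metric.closedBall 0 R)ᶜ = 0)
    (F : EuclideanSpace ℝ (Fin d) → EuclideanSpace ℝ (Fin d) → EuclideanSpace ℝ (Fin d))
    (hF : ∀ x v, F x v =
      (∫ p, ψ ‖x - p.1‖ ∂f)⁻¹ • ∫ p, ψ ‖x - p.1‖ • (p.2 - v) ∂f) :
    ∃ C : ℝ,
      (∀ x v, (x, v) ∈ Metric.closedBall
          (0 : EuclideanSpace ℝ (Fin d) × EuclideanSpace ℝ (Fin d)) R → ‖F x v‖ ≤ C) ∧
      (∀ x v x' v', (x, v) ∈ Metric.closedBall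
          (0 : EuclideanSpace ℝ (Fin d) × EuclideanSpace ℝ (Fin d)) R →
        (x', v') ∈ Metric.closedBall
          (0 : EuclideanSpace ℝ (Fin d) × EuclideanSpace ℝ (Fin d)) R →
        ‖F x v - F x' v'‖ ≤ C * (‖x - x'‖ + ‖v - v'‖)) := by
  obtain rfl : F = alignmentForce ψ f := funext fun x => funext (hF x)
  have hμ : ∀ᵐ p ∂f, ‖p‖ ≤ R :=
    Filter.mem_of_superset (mem_ae_iff.2 hsupp) fun p => mem_closedBall_zero_iff.1
  set c := ψ (2 * R)
  set K := (L * (2 * R) + M) / c + L * (M * (2 * R)) / c ^ 2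
  refine ⟨max (M * (2 * R) / c) K, fun x v hxv => ?_, fun x v x' v' hxv hxv' => ?_⟩
  · obtain ⟨hx, hv⟩ := max_le_iff.1 (mem_closedBall_zero_iff.1 hxv)
    exact (norm_alignmentForce_le hR.le hψ_lip.continuousOn hψ_pos hψ_bdd hψ_mono hμ hx hv).trans
      (le_max_left _ _)
  · obtain ⟨hx, hv⟩ := max_le_iff.1 (mem_closedBall_zero_iff.1 hxv)
    obtain ⟨hx', hv'⟩ := max_le_iff.1 (mem_closedBall_zero_iff.1 hxv')
    grw [norm_alignmentForce_sub_le hR.le hψ_lip hψ_pos hψ_bdd hψ_mono hμ hx hv hx' hv',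
      ← le_max_right]
end
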